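/- Let θ ∈ (0, π/4) and let u, v, w₁ be points in ℝ² with w₁ and u in a common cone of half-angle θ at v (angle(w₁, v, u) ≤ θ) and |w₁v| ≥ |uv|/(2 cos θ) and |w₁v| ≤ |uv|. Then |u w₁| ≤ |uv| − |w₁v|(cos θ − sin θ). -/

import Mathlib

/-! By the law of cosines, `|uw|² ≤ a² + b² - 2ab cos θ` with `a = |uv|`, `b = |wv|`. The square of
the claimed bound exceeds this by `2 b sin θ (a - b cos θ)`, which is nonnegative because
`b cos θ ≤ b ≤ a`. -/

open Real EuclideanGeometry

section

variable {V P : Type*} [NormedAddCommGroup V] [InnerProductSpace ℝ V] [MetricSpace P]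
  [NormedAddTorsor V P]

theorem dist_sq_le_of_angle_le {θ : ℝ} (hθπ : θ ≤ π) {u v w : P} (hang : ∠ u v w ≤ θ) :
    dist u w ^ 2 ≤ dist u v ^ 2 + dist w v ^ 2 - 2 * dist u v * dist w v * cos θ := by
  have hcos : cos θ ≤ cos (∠ u v w) :=
    cos_le_cos_of_nonneg_of_le_pi (angle_nonneg u v w) hθπ hang
  have hlaw := law_cos u v w
  nlinarith [mul_nonneg (dist_nonneg : 0 ≤ dist u v) (dist_nonneg : 0 ≤ dist w v)]

theorem dist_le_dist_sub_mul_cos_sub_sin {θ : ℝ} (hθ0 : 0 ≤ θ) (hθπ : θ ≤ π) {u v w : P}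
    (hang : ∠ w v u ≤ θ) (hwv : dist w v ≤ dist u v) :
    dist u w ≤ dist u v - dist w v * (cos θ - sin θ) := by
  have hsin : 0 ≤ sin θ := sin_nonneg_of_nonneg_of_le_pi hθ0 hθπ
  have hcos : cos θ ≤ 1 := cos_le_one θ
  have hb : 0 ≤ dist w v := dist_nonneg
  have hbcos : dist w v * cos θ ≤ dist u v := by nlinarith
  have hsq := dist_sq_le_of_angle_le hθπ (angle_comm w v u ▸ hang)
  refine le_of_sq_le_sq ?_ (by nlinarith)
  nlinarith [sin_sq_add_cos_sq θ, mul_nonneg (mul_nonneg hb hsin) (sub_nonneg.2 hbcos)]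

end

theorem stmt16_general (θ : ℝ) (hθ : θ ∈ Set.Ioo 0 (π/4))
    (u v w₁ : EuclideanSpace ℝ (Fin 2))
    (hang : EuclideanGeometry.angle w₁ v u ≤ θ)
    (h2 : dist w₁ v ≤ dist u v) :
    dist u w₁ ≤ dist u v - dist w₁ v * (Real.cos θ - Real.sin θ) :=
  dist_le_dist_sub_mul_cos_sub_sin hθ.1.le (by linarith [hθ.2, pi_pos]) hang h2

theorem stmt16 (θ : ℝ) (hθ : θ ∈ Set.Ioo 0 (π/4))
    (u v w₁ : EuclideanSpace ℝ (Fin 2))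
    (hang : EuclideanGeometry.angle w₁ v u ≤ θ)
    (h1 : dist u v / (2 * Real.cos θ) ≤ dist w₁ v)
    (h2 : dist w₁ v ≤ dist u v) :
    dist u w₁ ≤ dist u v - dist w₁ v * (Real.cos θ - Real.sin θ) :=
  stmt16_general θ hθ u v w₁ hang h2
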